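/- arXiv:1304.0224 — 4 statements merged into one kernel-verified Lean document; each statement's English description precedes it below -/
import Mathlib

section
/- Let n ≥ 3, let K be a division ring with at least 3 elements, let P be an n-dimensional affine space over K, set m = ⌊(n+1)/2⌋ and r = 2^{m+1} − 4, and let a₁, …, a_m be independent lines of P with U the affine span of a₁ ∪ … ∪ a_m. Then every line h of P contained in U satisfies M_r(a₁,…,a_m; h). -/
/-- `a` is an affine line: a nonempty affine subspace whose direction has finrank 1. -/
def ALine (K : Type*) {V P : Type*} [DivisionRing K] [AddCommGroup V] [Module K V]
    [AddTorsor V P] (a : AffineSubspace K P) : Prop :=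
  (a : Set P).Nonempty ∧ Module.finrank K a.direction = 1

/-- `a` is an affine plane: a nonempty affine subspace whose direction has finrank 2. -/
def APlane (K : Type*) {V P : Type*} [DivisionRing K] [AddCommGroup V] [Module K V]
    [AddTorsor V P] (a : AffineSubspace K P) : Prop :=
  (a : Set P).Nonempty ∧ Module.finrank K a.direction = 2

/-- Two lines intersect: they are different and have a common point. -/
def AMeets {K V P : Type*} [DivisionRing K] [AddCommGroup V] [Module K V]
    [AddTorsor V P] (a b : AffineSubspace K P) : Prop :=
  a ≠ b ∧ ((a : Set P) ∩ (b : Set P)).Nonempty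

/-- `x` meets the lines `y` and `z` in two distinct points. -/
def AMeetsTwo {K V P : Type*} [DivisionRing K] [AddCommGroup V] [Module K V]
    [AddTorsor V P] (x y z : AffineSubspace K P) : Prop :=
  AMeets x y ∧ AMeets x z ∧ x ⊓ y ≠ x ⊓ z

/-- `M(ℓ₁,…,ℓ_k; x)`: `x` is one of the lines in the list `ls`, or `x` meets two of
them in two distinct points. -/
def MPred {K V P : Type*} [DivisionRing K] [AddCommGroup V] [Module K V]
    [AddTorsor V P] (ls : List (AffineSubspace K P)) (x : AffineSubspace K P) : Prop :=
  x ∈ ls ∨ ∃ y ∈ ls, ∃ z ∈ ls, AMeetsTwo x y z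

/-- `M_q(a₁,…,a_m; x)`: there are lines `b₁,…,b_q` such that
`M(a₁,…,a_m,b₁,…,b_{i-1}; bᵢ)` for all `i`, and `M(a₁,…,a_m,b₁,…,b_q; x)`. -/
def MqPred {K V P : Type*} [DivisionRing K] [AddCommGroup V] [Module K V]
    [AddTorsor V P] (q : ℕ) (as : List (AffineSubspace K P))
    (x : AffineSubspace K P) : Prop :=
  ∃ b : Fin q → AffineSubspace K P, (∀ i, ALine K (b i)) ∧
    (∀ i : Fin q, MPred (as ++ (List.ofFn b).take i) (b i)) ∧
    MPred (as ++ List.ofFn b) x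

/-!
Induction on `m`. Write the span as `W ⊔ A`, with `A` one of the lines and `W` the span of the
others. Independence makes `W` and `A` skew, so some affine functional `t` vanishes on `W` and is
`1` on `A`. A point `p` with `t p ∉ {0, 1}` lies on a transversal `fe` (`f ∈ W`, `e ∈ A`), which
meets `A` and every listed line of `W` through `f`. A point on neither `A` nor a transversal has
`t p ∈ {0, 1}`, and the line joining it to a point of the other level (on `A`, or on a listed line
`b ≤ W`) meets a transversal. Hence every point `p` lies on a line obtained in two more steps once
some line of `W` through a suitable foot `f_p ∈ W` is listed. For a line `h` through `p ≠ q`, list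
a line of `W` through `f_p` and `f_q` (by induction with `2 ^ m - 3` lines, or none when `W` is a
single line), then the lines through `p` and `q`, which `h` meets in two distinct points: in total
`2 ^ m + 1 ≤ 2 ^ (m + 1) - 4` lines for `m ≥ 3`, and `4` for `m = 2`.
-/

open Module

section

variable {K V P : Type*} [DivisionRing K] [AddCommGroup V] [Module K V] [AddTorsor V P]

namespace ALine

theorem exists_two_points {x : AffineSubspace K P} (hx : ALine K x) :
    ∃ p ∈ x, ∃ q ∈ x, p ≠ q := by
  obtain ⟨p, hp⟩ := hx.1
  have := Module.nontrivial_of_finrank_eq_succ hx.2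
  obtain ⟨⟨v, hv⟩, hv0⟩ := exists_ne (0 : x.direction)
  exact ⟨p, hp, v +ᵥ p, AffineSubspace.vadd_mem_of_mem_direction hv hp,
    fun h => hv0 (Subtype.ext (by simpa using congrArg (· -ᵥ p) h.symm))⟩

theorem exists_mem_ne {x : AffineSubspace K P} (hx : ALine K x) (p : P) : ∃ q ∈ x, q ≠ p := by
  obtain ⟨q₁, hq₁, q₂, hq₂, hq⟩ := hx.exists_two_points
  by_cases h : q₁ = p
  · exact ⟨q₂, hq₂, h ▸ hq.symm⟩
  · exact ⟨q₁, hq₁, h⟩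

theorem eq_of_le {x y : AffineSubspace K P} (hx : ALine K x) (hy : ALine K y) (h : x ≤ y) :
    x = y := by
  have : FiniteDimensional K y.direction := .of_finrank_eq_succ hy.2
  exact AffineSubspace.eq_of_direction_eq_of_nonempty_of_le
    (Submodule.eq_of_le_of_finrank_eq (AffineSubspace.direction_le h) (hx.2.trans hy.2.symm))
    hx.1 h

theorem ne_bot {x : AffineSubspace K P} (hx : ALine K x) : x ≠ ⊥ := by
  rintro rfl
  simpa using hx.1

end ALine

theorem aLine_affineSpan_pair {p q : P} (h : p ≠ q) : ALine K line[K, p, q] :=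
  ⟨⟨p, left_mem_affineSpan_pair K p q⟩, by
    rw [direction_affineSpan, vectorSpan_pair, finrank_span_singleton (vsub_ne_zero.2 h)]⟩

theorem ALine.eq_of_mem_of_mem {x y : AffineSubspace K P} (hx : ALine K x) (hy : ALine K y)
    {p q : P} (hpq : p ≠ q) (hpx : p ∈ x) (hqx : q ∈ x) (hpy : p ∈ y) (hqy : q ∈ y) : x = y :=
  ((aLine_affineSpan_pair hpq).eq_of_le hx (affineSpan_pair_le_of_mem_of_mem hpx hqx)).symm.trans
    ((aLine_affineSpan_pair hpq).eq_of_le hy (affineSpan_pair_le_of_mem_of_mem hpy hqy))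

theorem ALine.exists_aLine_le_of_mem {b s : AffineSubspace K P} (hb : ALine K b) (hbs : b ≤ s)
    {f₁ f₂ : P} (hf₁ : f₁ ∈ s) (hf₂ : f₂ ∈ s) : ∃ w, ALine K w ∧ w ≤ s ∧ f₁ ∈ w ∧ f₂ ∈ w := by
  by_cases hf : f₁ = f₂
  · subst hf
    obtain ⟨q, hq, hqf⟩ := hb.exists_mem_ne f₁
    exact ⟨line[K, f₁, q], aLine_affineSpan_pair (Ne.symm hqf),
      affineSpan_pair_le_of_mem_of_mem hf₁ (hbs hq), left_mem_affineSpan_pair K f₁ q,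
      left_mem_affineSpan_pair K f₁ q⟩
  · exact ⟨line[K, f₁, f₂], aLine_affineSpan_pair hf, affineSpan_pair_le_of_mem_of_mem hf₁ hf₂,
      left_mem_affineSpan_pair K f₁ f₂, right_mem_affineSpan_pair K f₁ f₂⟩

namespace MPred

variable {ls ls' : List (AffineSubspace K P)} {x y z : AffineSubspace K P}

theorem mono (h : MPred ls x) (hs : ls ⊆ ls') : MPred ls' x :=
  h.imp (@hs x) fun ⟨y, hy, z, hz, hxyz⟩ => ⟨y, hs hy, z, hs hz, hxyz⟩

theorem of_mem_of_notMem {p q : P} (hy : y ∈ ls) (hz : z ∈ ls) (hpx : p ∈ x) (hpy : p ∈ y)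
    (hqx : q ∈ x) (hqz : q ∈ z) (hpz : p ∉ z) (hqy : q ∉ y) : MPred ls x :=
  .inr ⟨y, hy, z, hz, ⟨fun h => hqy (h ▸ hqx), p, hpx, hpy⟩, ⟨fun h => hpz (h ▸ hpx), q, hqx, hqz⟩,
    fun h => hpz ((AffineSubspace.mem_inf_iff _ _ _).1
      (h ▸ (AffineSubspace.mem_inf_iff _ _ _).2 ⟨hpx, hpy⟩)).2⟩

theorem of_aLine {p q : P} (hx : ALine K x) (hy : ALine K y) (hz : ALine K z) (hyls : y ∈ ls)
    (hzls : z ∈ ls) (hpq : p ≠ q) (hpx : p ∈ x) (hpy : p ∈ y) (hqx : q ∈ x) (hqz : q ∈ z) :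
    MPred ls x := by
  by_cases hxy : x = y
  · exact .inl (hxy ▸ hyls)
  by_cases hxz : x = z
  · exact .inl (hxz ▸ hzls)
  exact of_mem_of_notMem hyls hzls hpx hpy hqx hqz
    (fun hpz => hxz (hx.eq_of_mem_of_mem hz hpq hpx hqx hpz hqz))
    (fun hqy => hxy (hx.eq_of_mem_of_mem hy hpq hpx hqx hpy hqy))

end MPred

def MChain : List (AffineSubspace K P) → List (AffineSubspace K P) → Prop
  | _, [] => True
  | ls, b :: c => ALine K b ∧ MPred ls b ∧ MChain (ls ++ [b]) c

namespace MChain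

theorem mono : ∀ {ls ls' c : List (AffineSubspace K P)}, MChain ls c → ls ⊆ ls' → MChain ls' c
  | _, _, [], _, _ => trivial
  | _, _, _ :: _, ⟨hb, hM, hc⟩, hs => ⟨hb, hM.mono hs, hc.mono (List.append_subset.2
    ⟨List.subset_append_of_subset_left _ hs, List.subset_append_right _ _⟩)⟩

theorem append : ∀ {ls c₁ c₂ : List (AffineSubspace K P)},
    MChain ls c₁ → MChain (ls ++ c₁) c₂ → MChain ls (c₁ ++ c₂)
  | _, [], _, _, h₂ => by simpa using h₂
  | _, _ :: _, _, ⟨hb, hM, h₁⟩, h₂ => ⟨hb, hM, h₁.append (by simpa using h₂)⟩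

theorem replicate {ls : List (AffineSubspace K P)} {b : AffineSubspace K P} (hb : ALine K b)
    (hbls : b ∈ ls) : ∀ n, MChain ls (List.replicate n b)
  | 0 => trivial
  | n + 1 => ⟨hb, .inl hbls, replicate hb (List.mem_append_left _ hbls) n⟩

theorem forall_mPred_take : ∀ {ls c : List (AffineSubspace K P)}, MChain ls c →
    ∀ i : Fin c.length, MPred (ls ++ c.take i) (c.get i)
  | _, [], _, i => i.elim0
  | _, _ :: _, ⟨_, hM, hc⟩, i => by
    refine Fin.cases (by simpa using hM) (fun j => ?_) i
    simpa using hc.forall_mPred_take j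

theorem forall_aLine : ∀ {ls c : List (AffineSubspace K P)}, MChain ls c → ∀ x ∈ c, ALine K x
  | _, [], _, _, hx => absurd hx List.not_mem_nil
  | _, _ :: _, ⟨hb, _, hc⟩, _, hx => (List.mem_cons.1 hx).elim (· ▸ hb) (hc.forall_aLine _)

theorem mqPred {as c : List (AffineSubspace K P)} {x : AffineSubspace K P} (hc : MChain as c)
    (hx : MPred (as ++ c) x) : MqPred c.length as x :=
  ⟨c.get, fun i => hc.forall_aLine _ (List.get_mem _ _), by
    simpa only [List.ofFn_get] using hc.forall_mPred_take, by rwa [List.ofFn_get]⟩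

end MChain

def Reach (k : ℕ) (ls : List (AffineSubspace K P)) (x : AffineSubspace K P) : Prop :=
  ∃ c, MChain ls c ∧ c.length ≤ k ∧ MPred (ls ++ c) x

def Adjoinable (k : ℕ) (ls : List (AffineSubspace K P)) (x : AffineSubspace K P) : Prop :=
  ∃ c, MChain ls c ∧ c.length ≤ k ∧ x ∈ ls ++ c

section Reach

variable {k k' r : ℕ} {ls ls' : List (AffineSubspace K P)} {x : AffineSubspace K P}

theorem Reach.mono (h : Reach k ls x) (hk : k ≤ k') : Reach k' ls x :=
  let ⟨c, hc, hlen, hx⟩ := h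
  ⟨c, hc, hlen.trans hk, hx⟩

theorem Reach.adjoinable (h : Reach k ls x) (hx : ALine K x) : Adjoinable (k + 1) ls x :=
  let ⟨c, hc, hlen, hM⟩ := h
  ⟨c ++ [x], hc.append ⟨hx, hM, trivial⟩, by simpa using hlen, by simp⟩

theorem Adjoinable.mono (h : Adjoinable k ls x) (hk : k ≤ k') (hs : ls ⊆ ls') :
    Adjoinable k' ls' x :=
  let ⟨c, hc, hlen, hx⟩ := h
  ⟨c, hc.mono hs, hlen.trans hk, List.append_subset.2
    ⟨List.subset_append_of_subset_left _ hs, List.subset_append_right _ _⟩ hx⟩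

/-- Pad the chain to length exactly `r` with copies of `b`, which satisfy `M` trivially. -/
theorem Reach.mqPred {b : AffineSubspace K P} (h : Reach r ls x) (hb : ALine K b) (hbls : b ∈ ls) :
    MqPred r ls x := by
  obtain ⟨c, hc, hlen, hx⟩ := h
  have hpad := hc.append (MChain.replicate hb (List.subset_append_left _ _ hbls) (r - c.length))
  have hr : (c ++ List.replicate (r - c.length) b).length = r := by
    rw [List.length_append, List.length_replicate]
    omega
  exact hr ▸ hpad.mqPred (hx.mono (by simp))

end Reach

theorem eq_lineMap_of_vsub_eq {p w₀ a₀ : P} {u y : V} {r : K} (h0 : r ≠ 0) (h1 : r ≠ 1)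
    (h : p -ᵥ w₀ = u + y + r • (a₀ -ᵥ w₀)) :
    p = AffineMap.lineMap ((1 - r)⁻¹ • u +ᵥ w₀) (r⁻¹ • y +ᵥ a₀) r := by
  refine vsub_left_cancel (p := w₀) ?_
  rw [h, AffineMap.lineMap_apply, vadd_vsub_assoc, vadd_vsub_vadd_comm, vadd_vsub, smul_add,
    smul_sub, smul_smul, smul_smul, mul_inv_cancel₀ h0, one_smul]
  have hu : (1 - r)⁻¹ • u - (r * (1 - r)⁻¹) • u = u := by
    rw [← sub_smul, ← one_sub_mul, mul_inv_cancel₀ (sub_ne_zero.2 h1.symm), one_smul]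
  conv_lhs => rw [← hu]
  abel

theorem AffineMap.linear_apply_eq_zero_of_mem_direction {t : P →ᵃ[K] K} {s : AffineSubspace K P}
    {c : K} (hc : ∀ p ∈ s, t p = c) {p : P} (hp : p ∈ s) {u : V} (hu : u ∈ s.direction) :
    t.linear u = 0 := by
  have := hc _ (AffineSubspace.vadd_mem_of_mem_direction hu hp)
  rwa [AffineMap.map_vadd, hc p hp, vadd_eq_add, add_eq_right] at this

structure Separates (t : P →ᵃ[K] K) (W A : AffineSubspace K P) : Prop where
  eq_zero : ∀ p ∈ W, t p = 0
  eq_one : ∀ p ∈ A, t p = 1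

theorem exists_separates_of_finrank_sup_eq {W A : AffineSubspace K P}
    (h : finrank K (W ⊔ A).direction = finrank K W.direction + finrank K A.direction + 1) :
    ∃ t : P →ᵃ[K] K, Separates t W A := by
  obtain ⟨w₀, hw₀⟩ : (W : Set P).Nonempty := by
    rw [Set.nonempty_iff_ne_empty, Ne, AffineSubspace.coe_eq_bot_iff]
    rintro rfl
    rw [bot_sup_eq, AffineSubspace.direction_bot, finrank_bot] at h
    omega
  obtain ⟨a₀, ha₀⟩ : (A : Set P).Nonempty := by
    rw [Set.nonempty_iff_ne_empty, Ne, AffineSubspace.coe_eq_bot_iff]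
    rintro rfl
    rw [sup_bot_eq, AffineSubspace.direction_bot, finrank_bot] at h
    omega
  have : FiniteDimensional K (W ⊔ A).direction := Module.finite_of_finrank_pos (by omega)
  have : FiniteDimensional K W.direction :=
    Submodule.finiteDimensional_of_le (AffineSubspace.direction_le (le_sup_left : W ≤ W ⊔ A))
  have : FiniteDimensional K A.direction :=
    Submodule.finiteDimensional_of_le (AffineSubspace.direction_le (le_sup_right : A ≤ W ⊔ A))
  set v := a₀ -ᵥ w₀
  have hv : v ∉ W.direction ⊔ A.direction := by
    intro hv
    rw [AffineSubspace.direction_sup hw₀ ha₀,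
      sup_eq_left.2 ((Submodule.span_singleton_le_iff_mem _ _).2 hv)] at h
    have := Submodule.finrank_add_le_finrank_add_finrank W.direction A.direction
    omega
  obtain ⟨φ, hφv, hφ⟩ := Submodule.exists_dual_map_eq_bot_of_notMem hv inferInstance
  have hφ0 : ∀ u ∈ W.direction ⊔ A.direction, φ u = 0 := fun u hu =>
    LinearMap.mem_ker.1 (LinearMap.le_ker_iff_map.2 hφ hu)
  refine ⟨.mk' (fun p => φ.smulRight (φ v)⁻¹ (p -ᵥ w₀)) (φ.smulRight (φ v)⁻¹) w₀
    (fun p => by simp), fun p hp => ?_, fun p hp => ?_⟩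
  · simp [hφ0 _ (Submodule.mem_sup_left (AffineSubspace.vsub_mem_direction hp hw₀)),
      LinearMap.smulRight_apply]
  · have hpv : p -ᵥ w₀ = (p -ᵥ a₀) + v := (vsub_add_vsub_cancel p a₀ w₀).symm
    simp [hpv, hφ0 _ (Submodule.mem_sup_right (AffineSubspace.vsub_mem_direction hp ha₀)),
      LinearMap.smulRight_apply, mul_inv_cancel₀ hφv]

namespace Separates

variable {t : P →ᵃ[K] K} {W A : AffineSubspace K P}

theorem notMem_right (ht : Separates t W A) {p : P} (hp : p ∈ W) : p ∉ A := fun hpA =>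
  zero_ne_one ((ht.eq_zero p hp).symm.trans (ht.eq_one p hpA))

theorem notMem_left (ht : Separates t W A) {p : P} (hp : p ∈ A) : p ∉ W := fun hpW =>
  ht.notMem_right hpW hp

theorem exists_transversal (ht : Separates t W A) {p : P} (hp : p ∈ W ⊔ A) (h0 : t p ≠ 0)
    (h1 : t p ≠ 1) : ∃ f ∈ W, ∃ e ∈ A, p ∈ line[K, f, e] := by
  obtain ⟨w₀, hw₀⟩ : (W : Set P).Nonempty := by
    rw [Set.nonempty_iff_ne_empty, Ne, AffineSubspace.coe_eq_bot_iff]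
    rintro rfl
    exact h1 (ht.eq_one p (by simpa using hp))
  obtain ⟨a₀, ha₀⟩ : (A : Set P).Nonempty := by
    rw [Set.nonempty_iff_ne_empty, Ne, AffineSubspace.coe_eq_bot_iff]
    rintro rfl
    exact h0 (ht.eq_zero p (by simpa using hp))
  have hdir : p -ᵥ w₀ ∈ (W ⊔ A).direction :=
    AffineSubspace.vsub_mem_direction hp (le_sup_left (α := AffineSubspace K P) hw₀)
  rw [AffineSubspace.direction_sup hw₀ ha₀] at hdir
  obtain ⟨x, hx, z, hz, hxz⟩ := Submodule.mem_sup.1 hdir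
  obtain ⟨u, hu, y, hy, rfl⟩ := Submodule.mem_sup.1 hx
  obtain ⟨r, rfl⟩ := Submodule.mem_span_singleton.1 hz
  have hr : t p = r := by
    rw [← vsub_vadd p w₀, AffineMap.map_vadd, ← hxz, map_add, map_add, map_smul,
      AffineMap.linear_apply_eq_zero_of_mem_direction ht.eq_zero hw₀ hu,
      AffineMap.linear_apply_eq_zero_of_mem_direction ht.eq_one ha₀ hy,
      AffineMap.linearMap_vsub, ht.eq_one a₀ ha₀, ht.eq_zero w₀ hw₀]
    simp
  rw [hr] at h0 h1
  exact ⟨_, AffineSubspace.vadd_mem_of_mem_direction (Submodule.smul_mem _ _ hu) hw₀,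
    _, AffineSubspace.vadd_mem_of_mem_direction (Submodule.smul_mem _ _ hy) ha₀,
    eq_lineMap_of_vsub_eq h0 h1 hxz.symm ▸ AffineMap.lineMap_mem_affineSpan_pair r _ _⟩

theorem aLine_transversal (ht : Separates t W A) {f e : P} (hf : f ∈ W) (he : e ∈ A) :
    ALine K line[K, f, e] :=
  aLine_affineSpan_pair fun hfe => ht.notMem_right hf (hfe ▸ he)

theorem mPred_transversal (ht : Separates t W A) {ls : List (AffineSubspace K P)}
    {w : AffineSubspace K P} {f e : P} (hw : w ∈ ls) (hwW : w ≤ W) (hfw : f ∈ w) (hA : A ∈ ls)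
    (he : e ∈ A) : MPred ls line[K, f, e] :=
  .of_mem_of_notMem hw hA (left_mem_affineSpan_pair K f e) hfw (right_mem_affineSpan_pair K f e) he
    (ht.notMem_right (hwW hfw)) (fun hew => ht.notMem_left he (hwW hew))

/-- `pg` meets `B` at `g` and a transversal `T` at a point `x` with `t x ∉ {0, 1}`; and `g ∉ T`,
for otherwise `pg = T` would be a transversal through `p`. -/
theorem exists_adjoinable_of_forall_notMem (ht : Separates t W A)
    (hK : (3 : Cardinal) ≤ Cardinal.mk K) {p g : P} (hp : p ∈ W ⊔ A) (hg : g ∈ W ⊔ A)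
    (htpg : t p = 0 ∧ t g = 1 ∨ t p = 1 ∧ t g = 0)
    (hT : ∀ f ∈ W, ∀ e ∈ A, p ∉ line[K, f, e]) {B : AffineSubspace K P} (hgB : g ∈ B)
    (hB : ∀ y ∈ B, t y = t g) :
    ∃ f ∈ W, ∀ (ls : List (AffineSubspace K P)) (w : AffineSubspace K P),
      w ∈ ls → w ≤ W → f ∈ w → A ∈ ls → B ∈ ls →
      ∃ L, ALine K L ∧ p ∈ L ∧ Adjoinable 2 ls L := by
  obtain ⟨c, hc0, hc1⟩ := Cardinal.exists_ne_ne_of_three_le hK 0 1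
  set x := AffineMap.lineMap p g c
  have htx : t x ≠ 0 ∧ t x ≠ 1 ∧ t x ≠ t g := by
    rw [AffineMap.apply_lineMap]
    rcases htpg with ⟨hp0, hg1⟩ | ⟨hp1, hg0⟩
    · simp [hp0, hg1, AffineMap.lineMap_apply_module, hc0, hc1]
    · simp only [hp1, hg0, AffineMap.lineMap_apply_module, smul_eq_mul, mul_one, mul_zero, add_zero]
      exact ⟨sub_ne_zero.2 hc1.symm, fun h => hc0 (by simpa using h),
        sub_ne_zero.2 hc1.symm⟩
  have hpg : p ≠ g := fun h => by rcases htpg with ⟨h0, h1⟩ | ⟨h0, h1⟩ <;> simp_all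
  have hxg : x ≠ g := fun h => htx.2.2 (congrArg t h)
  have hpgL := aLine_affineSpan_pair (K := K) hpg
  have hxL : x ∈ line[K, p, g] := AffineMap.lineMap_mem_affineSpan_pair c p g
  obtain ⟨f, hf, e, he, hxT⟩ := ht.exists_transversal (AffineMap.lineMap_mem c hp hg) htx.1 htx.2.1
  refine ⟨f, hf, fun ls w hw hwW hfw hA hBls => ⟨_, hpgL, left_mem_affineSpan_pair K p g,
    [line[K, f, e], line[K, p, g]], ⟨ht.aLine_transversal hf he,
      ht.mPred_transversal hw hwW hfw hA he, hpgL, ?_, trivial⟩, le_rfl, by simp⟩⟩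
  refine .of_mem_of_notMem (List.mem_append_left _ hBls) (by simp)
    (right_mem_affineSpan_pair K p g) hgB hxL hxT (fun hgT => ?_) (fun hxB => htx.2.2 (hB x hxB))
  have := hpgL.eq_of_mem_of_mem (ht.aLine_transversal hf he) hxg hxL
    (right_mem_affineSpan_pair K p g) hxT hgT
  exact hT f hf e he (this ▸ left_mem_affineSpan_pair K p g)

theorem exists_adjoinable (ht : Separates t W A) (hK : (3 : Cardinal) ≤ Cardinal.mk K)
    (hA : ALine K A) {b : AffineSubspace K P} (hbW : b ≤ W) (hb : (b : Set P).Nonempty) {p : P}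
    (hp : p ∈ W ⊔ A) :
    ∃ f ∈ W, ∀ (ls : List (AffineSubspace K P)) (w : AffineSubspace K P),
      w ∈ ls → w ≤ W → f ∈ w → A ∈ ls → b ∈ ls →
      ∃ L, ALine K L ∧ p ∈ L ∧ Adjoinable 2 ls L := by
  obtain ⟨w₀, hw₀⟩ := hb
  by_cases hpA : p ∈ A
  · exact ⟨w₀, hbW hw₀, fun ls w _ _ _ hAls _ => ⟨A, hA, hpA, [], trivial, by simp, by simpa⟩⟩
  by_cases hT : ∃ f ∈ W, ∃ e ∈ A, p ∈ line[K, f, e]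
  · obtain ⟨f, hf, e, he, hpT⟩ := hT
    exact ⟨f, hf, fun ls w hw hwW hfw hAls _ => ⟨_, ht.aLine_transversal hf he, hpT,
      [line[K, f, e]], ⟨ht.aLine_transversal hf he, ht.mPred_transversal hw hwW hfw hAls he,
        trivial⟩, by simp, by simp⟩⟩
  push Not at hT
  have htp : t p = 0 ∨ t p = 1 := by
    by_contra! h
    obtain ⟨f, hf, e, he, hpT⟩ := ht.exists_transversal hp h.1 h.2
    exact hT f hf e he hpT
  rcases htp with hp0 | hp1
  · obtain ⟨a₀, ha₀⟩ := hA.1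
    obtain ⟨f, hf, hcov⟩ := ht.exists_adjoinable_of_forall_notMem hK hp
      (le_sup_right (α := AffineSubspace K P) ha₀) (.inl ⟨hp0, ht.eq_one a₀ ha₀⟩) hT ha₀
      (fun y hy => (ht.eq_one y hy).trans (ht.eq_one a₀ ha₀).symm)
    exact ⟨f, hf, fun ls w hw hwW hfw hAls _ => hcov ls w hw hwW hfw hAls hAls⟩
  · obtain ⟨f, hf, hcov⟩ := ht.exists_adjoinable_of_forall_notMem hK hp
      (le_sup_left (α := AffineSubspace K P) (hbW hw₀)) (.inr ⟨hp1, ht.eq_zero w₀ (hbW hw₀)⟩) hT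
      hw₀ (fun y hy => (ht.eq_zero y (hbW hy)).trans (ht.eq_zero w₀ (hbW hw₀)).symm)
    exact ⟨f, hf, fun ls w hw hwW hfw hAls hbls => hcov ls w hw hwW hfw hAls hbls⟩

theorem reach_of_le_sup (ht : Separates t W A) (hK : (3 : Cardinal) ≤ Cardinal.mk K)
    (hA : ALine K A) {b : AffineSubspace K P} (hbW : b ≤ W) (hb : (b : Set P).Nonempty) {k : ℕ}
    {ls : List (AffineSubspace K P)} (hAls : A ∈ ls) (hbls : b ∈ ls)
    (hW : ∀ f₁ ∈ W, ∀ f₂ ∈ W, ∃ w, w ≤ W ∧ f₁ ∈ w ∧ f₂ ∈ w ∧ Adjoinable k ls w)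
    {h : AffineSubspace K P} (hh : ALine K h) (hle : h ≤ W ⊔ A) : Reach (k + 4) ls h := by
  obtain ⟨p, hp, q, hq, hpq⟩ := hh.exists_two_points
  obtain ⟨fp, hfp, hcovp⟩ := ht.exists_adjoinable hK hA hbW hb (hle hp)
  obtain ⟨fq, hfq, hcovq⟩ := ht.exists_adjoinable hK hA hbW hb (hle hq)
  obtain ⟨w, hwW, hfpw, hfqw, cw, hcw, hcwk, hwls⟩ := hW fp hfp fq hfq
  have hls₁ : ls ⊆ ls ++ cw := List.subset_append_left _ _
  obtain ⟨Lp, hLp, hpLp, cp, hcp, hcp2, hLpls⟩ :=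
    hcovp (ls ++ cw) w hwls hwW hfpw (hls₁ hAls) (hls₁ hbls)
  have hls₂ : ls ++ cw ⊆ ls ++ cw ++ cp := List.subset_append_left _ _
  obtain ⟨Lq, hLq, hqLq, cq, hcq, hcq2, hLqls⟩ :=
    hcovq (ls ++ cw ++ cp) w (hls₂ hwls) hwW hfqw (hls₂ (hls₁ hAls)) (hls₂ (hls₁ hbls))
  refine ⟨cw ++ cp ++ cq, (hcw.append hcp).append (by simpa using hcq),
    by simp only [List.length_append]; omega,
    .of_aLine hh hLp hLq ?_ ?_ hpq hp hpLp hq hqLq⟩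
  · simp only [List.mem_append] at hLpls ⊢; tauto
  · simp only [List.mem_append] at hLqls ⊢; tauto

end Separates

theorem AffineSubspace.finrank_direction_sup_le (s₁ s₂ : AffineSubspace K P) :
    finrank K (s₁ ⊔ s₂).direction ≤ finrank K s₁.direction + finrank K s₂.direction + 1 := by
  rcases (s₁ : Set P).eq_empty_or_nonempty with h₁ | ⟨p₁, hp₁⟩
  · rw [(AffineSubspace.coe_eq_bot_iff _).1 h₁, bot_sup_eq]
    omega
  rcases (s₂ : Set P).eq_empty_or_nonempty with h₂ | ⟨p₂, hp₂⟩
  · rw [(AffineSubspace.coe_eq_bot_iff _).1 h₂, sup_bot_eq]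
    omega
  by_cases hfd : FiniteDimensional K (s₁ ⊔ s₂).direction
  · have : FiniteDimensional K s₁.direction :=
      Submodule.finiteDimensional_of_le (AffineSubspace.direction_le (le_sup_left : s₁ ≤ s₁ ⊔ s₂))
    have : FiniteDimensional K s₂.direction :=
      Submodule.finiteDimensional_of_le (AffineSubspace.direction_le (le_sup_right : s₂ ≤ s₁ ⊔ s₂))
    rw [AffineSubspace.direction_sup hp₁ hp₂]
    calc finrank K ↥(s₁.direction ⊔ s₂.direction ⊔ K ∙ (p₂ -ᵥ p₁))
        ≤ finrank K ↥(s₁.direction ⊔ s₂.direction) + finrank K (K ∙ (p₂ -ᵥ p₁)) :=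
          Submodule.finrank_add_le_finrank_add_finrank _ _
      _ ≤ finrank K s₁.direction + finrank K s₂.direction + 1 :=
          add_le_add (Submodule.finrank_add_le_finrank_add_finrank _ _)
            (by simpa using finrank_span_le_card ({p₂ -ᵥ p₁} : Set V))
  · rw [Module.finrank_of_not_finite hfd]
    omega

theorem iSup_fin_succ {α : Type*} [CompleteLattice α] {m : ℕ} (f : Fin (m + 1) → α) :
    ⨆ i, f i = f 0 ⊔ ⨆ i : Fin m, f i.succ :=
  le_antisymm
    (iSup_le fun i => Fin.cases le_sup_left
      (fun j => le_sup_of_le_right (le_iSup (fun j : Fin m => f j.succ) j)) i)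
    (sup_le (le_iSup f 0) (iSup_le fun j => le_iSup f j.succ))

theorem finrank_direction_iSup_aLine_le : ∀ {m : ℕ} (a : Fin m → AffineSubspace K P),
    (∀ i, ALine K (a i)) → finrank K (⨆ i, a i).direction ≤ 2 * m - 1
  | 0, a, _ => by rw [iSup_of_empty, AffineSubspace.direction_bot, finrank_bot]
  | 1, a, ha => by rw [iSup_unique, (ha _).2]
  | m + 2, a, ha => by
    have := AffineSubspace.finrank_direction_sup_le (a 0) (⨆ i : Fin (m + 1), a i.succ)
    have := finrank_direction_iSup_aLine_le (fun i : Fin (m + 1) => a i.succ) (fun i => ha _)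
    have := (ha 0).2
    rw [iSup_fin_succ]
    omega

theorem exists_adjoinable_le_iSup_succ {m : ℕ} {a : Fin (m + 2) → AffineSubspace K P}
    (ha : ∀ i, ALine K (a i))
    (IH : ∀ w, ALine K w → w ≤ ⨆ i : Fin (m + 1), a i.succ →
      Reach (2 ^ (m + 2) - 4) (List.ofFn fun i : Fin (m + 1) => a i.succ) w) :
    ∀ f₁ ∈ ⨆ i : Fin (m + 1), a i.succ, ∀ f₂ ∈ ⨆ i : Fin (m + 1), a i.succ,
      ∃ w, w ≤ ⨆ i : Fin (m + 1), a i.succ ∧ f₁ ∈ w ∧ f₂ ∈ w ∧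
        Adjoinable (2 ^ (m + 3) - 8) (List.ofFn a) w := by
  intro f₁ hf₁ f₂ hf₂
  have ha1W : a 1 ≤ ⨆ i : Fin (m + 1), a i.succ := le_iSup (fun i : Fin (m + 1) => a i.succ) 0
  rcases m with _ | m
  · rw [iSup_fin_succ, iSup_of_empty, sup_bot_eq] at hf₁ hf₂
    exact ⟨a 1, ha1W, hf₁, hf₂, [], trivial, Nat.zero_le _,
      List.mem_append_left _ (List.mem_ofFn.2 ⟨1, rfl⟩)⟩
  obtain ⟨w, hw, hwW, hf₁w, hf₂w⟩ := (ha 1).exists_aLine_le_of_mem ha1W hf₁ hf₂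
  refine ⟨w, hwW, hf₁w, hf₂w, ((IH w hw hwW).adjoinable hw).mono ?_ ?_⟩
  · have : 2 ^ (m + 1 + 3) = 2 * 2 ^ (m + 1 + 2) := by ring
    have : 8 ≤ 2 ^ (m + 1 + 2) := by
      simpa using Nat.pow_le_pow_right two_pos (Nat.le_add_left 3 m)
    omega
  · rw [List.ofFn_succ (f := a)]
    exact List.subset_cons_self _ _

theorem reach_of_le_iSup (hK : (3 : Cardinal) ≤ Cardinal.mk K) :
    ∀ {m : ℕ} (a : Fin m → AffineSubspace K P), (∀ i, ALine K (a i)) →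
      finrank K (⨆ i, a i).direction = 2 * m - 1 →
      ∀ h, ALine K h → h ≤ ⨆ i, a i → Reach (2 ^ (m + 1) - 4) (List.ofFn a) h
  | 0, a, _, _, h, hh, hle => absurd (le_bot_iff.1 (hle.trans_eq (iSup_of_empty a))) hh.ne_bot
  | 1, a, ha, _, h, hh, hle => by
    rw [iSup_unique] at hle
    exact ⟨[], trivial, le_rfl, .inl (by simp [hh.eq_of_le (ha _) hle])⟩
  | m + 2, a, ha, hdim, h, hh, hle => by
    set W := ⨆ i : Fin (m + 1), a i.succ
    have hU : ⨆ i, a i = W ⊔ a 0 := (iSup_fin_succ a).trans (sup_comm _ _)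
    have : finrank K W.direction ≤ 2 * (m + 1) - 1 :=
      finrank_direction_iSup_aLine_le _ (fun i => ha _)
    have := AffineSubspace.finrank_direction_sup_le W (a 0)
    have := (ha 0).2
    rw [hU] at hdim hle
    have hWdim : finrank K W.direction = 2 * (m + 1) - 1 := by omega
    obtain ⟨t, ht⟩ := exists_separates_of_finrank_sup_eq (W := W) (A := a 0) (by omega)
    have hW := exists_adjoinable_le_iSup_succ ha
      (reach_of_le_iSup hK (fun i : Fin (m + 1) => a i.succ) (fun i => ha _) hWdim)
    have hmem : ∀ i, a i ∈ List.ofFn a := fun i => List.mem_ofFn.2 ⟨i, rfl⟩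
    have h8 : 8 ≤ 2 ^ (m + 3) := by
      simpa using Nat.pow_le_pow_right two_pos (Nat.le_add_left 3 m)
    show Reach (2 ^ (m + 3) - 4) _ h
    exact (ht.reach_of_le_sup hK (ha 0) (le_iSup (fun i : Fin (m + 1) => a i.succ) 0) (ha 1).1
      (hmem 0) (hmem 1) hW hh hle).mono (by omega)

end

theorem statement13_general {K V P : Type*} [DivisionRing K] [AddCommGroup V] [Module K V]
    [AddTorsor V P] {m r : ℕ}
    (hK : (3 : Cardinal) ≤ Cardinal.mk K)
    (hr : r = 2 ^ (m + 1) - 4)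
    (a : Fin m → AffineSubspace K P) (ha : ∀ i, ALine K (a i))
    (hindep : Module.finrank K
      (affineSpan K (⋃ i, (a i : Set P))).direction = 2 * m - 1) :
    ∀ h : AffineSubspace K P, ALine K h → h ≤ affineSpan K (⋃ i, (a i : Set P)) →
      MqPred r (List.ofFn a) h := by
  have hU : affineSpan K (⋃ i, (a i : Set P)) = ⨆ i, a i := by
    simp only [AffineSubspace.span_iUnion, AffineSubspace.affineSpan_coe]
  rw [hU] at hindep ⊢
  intro h hh hle
  have hm : 0 < m := Nat.pos_of_ne_zero <| by
    rintro rfl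
    exact hh.ne_bot (le_bot_iff.1 (hle.trans_eq (iSup_of_empty a)))
  exact hr ▸ (reach_of_le_iSup hK a ha hindep h hh hle).mqPred (ha ⟨0, hm⟩)
    (List.mem_ofFn.2 ⟨_, rfl⟩)

theorem statement13 {K V P : Type*} [DivisionRing K] [AddCommGroup V] [Module K V]
    [AddTorsor V P] {n m r : ℕ} (hn : 3 ≤ n)
    (hK : (3 : Cardinal) ≤ Cardinal.mk K)
    (hdim : Module.finrank K V = n) (hm : m = (n + 1) / 2) (hr : r = 2 ^ (m + 1) - 4)
    (a : Fin m → AffineSubspace K P) (ha : ∀ i, ALine K (a i))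
    (hindep : Module.finrank K
      (affineSpan K (⋃ i, (a i : Set P))).direction = 2 * m - 1) :
    ∀ h : AffineSubspace K P, ALine K h → h ≤ affineSpan K (⋃ i, (a i : Set P)) →
      MqPred r (List.ofFn a) h :=
  statement13_general (V := V) hK hr a ha hindep
end

section
/- Let P be an affine space of dimension n ≥ 3 over the two-element field GF(2). Then: (a) every set S of lines of P such that any two distinct elements of S intersect has cardinality at most 2ⁿ − 1; (b) for every point X of P, the set of all lines of P through X has exactly 2ⁿ − 1 elements, and any two distinct lines through X intersect. -/
section Aux

variable {V P : Type*} [AddCommGroup V] [Module (ZMod 2) V] [AddTorsor V P]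

/-- A line over GF(2) has exactly two points. -/
lemma ALine.pair {a : AffineSubspace (ZMod 2) P} (ha : ALine (ZMod 2) a) {p : P}
    (hp : p ∈ a) : ∃ q : P, q ≠ p ∧ (a : Set P) = {p, q} := by
  obtain ⟨v, hv0, hv⟩ := finrank_eq_one_iff'.mp ha.2
  have hv0' : (v : V) ≠ 0 := fun h => hv0 (Subtype.ext h)
  have hmem : ∀ w : V, w ∈ a.direction ↔ (w = 0 ∨ w = (v : V)) := by
    intro w
    constructor
    · intro hw
      obtain ⟨c, hc⟩ := hv ⟨w, hw⟩
      have hc' : c • (v : V) = w := congrArg Subtype.val hc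
      rcases (by decide : ∀ c : ZMod 2, c = 0 ∨ c = 1) c with h | h <;> subst h
      · left; simpa using hc'.symm
      · right; simpa using hc'.symm
    · rintro (rfl | rfl)
      · exact a.direction.zero_mem
      · exact v.2
  refine ⟨(v : V) +ᵥ p, ?_, ?_⟩
  · intro h
    apply hv0'
    have := congrArg (· -ᵥ p) h
    simpa using this
  · ext x
    rw [SetLike.mem_coe, ← AffineSubspace.vsub_right_mem_direction_iff_mem hp, hmem]
    simp only [Set.mem_insert_iff, Set.mem_singleton_iff, vsub_eq_zero_iff_eq]
    constructor
    · rintro (h | h)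
      · exact Or.inl h
      · right; rw [← h]; simp
    · rintro (rfl | rfl) <;> simp

/-- The affine span of two distinct points over GF(2) is a line whose carrier is the pair. -/
lemma span_pair_line {p q : P} (h : q ≠ p) :
    ALine (ZMod 2) (affineSpan (ZMod 2) {p, q}) ∧
      ((affineSpan (ZMod 2) {p, q} : AffineSubspace (ZMod 2) P) : Set P) = {p, q} := by
  have hp : p ∈ affineSpan (ZMod 2) ({p, q} : Set P) :=
    mem_affineSpan _ (Set.mem_insert _ _)
  have hq : q ∈ affineSpan (ZMod 2) ({p, q} : Set P) :=
    mem_affineSpan _ (Set.mem_insert_of_mem _ rfl)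
  have hline : ALine (ZMod 2) (affineSpan (ZMod 2) ({p, q} : Set P)) := by
    refine ⟨⟨p, hp⟩, ?_⟩
    rw [direction_affineSpan, vectorSpan_pair]
    exact finrank_span_singleton (vsub_ne_zero.mpr (Ne.symm h))
  refine ⟨hline, ?_⟩
  obtain ⟨q', hq', hset⟩ := hline.pair hp
  have : q ∈ ({p, q'} : Set P) := hset ▸ hq
  rcases this with h1 | h1
  · exact absurd h1 h
  · rw [hset, h1]

variable {n : ℕ} (hn : 3 ≤ n) (hdim : Module.finrank (ZMod 2) V = n)

include hn hdim in
lemma card_points (X : P) : Nat.card P = 2 ^ n := by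
  have hfin : Module.Finite (ZMod 2) V :=
    Module.finite_of_finrank_pos (by omega)
  have : Finite V := Module.finite_of_finite (ZMod 2)
  have : Fintype V := Fintype.ofFinite V
  have hcardV : Fintype.card V = 2 ^ n := by
    rw [Module.card_eq_pow_finrank (K := ZMod 2) (V := V), ZMod.card, hdim]
  rw [Nat.card_congr (Equiv.vaddConst X).symm, Nat.card_eq_fintype_card, hcardV]

include hn hdim in
lemma equiv_lines_through (X : P) :
    ∃ e : {q : P // q ≠ X} ≃ {l : AffineSubspace (ZMod 2) P // ALine (ZMod 2) l ∧ X ∈ l},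
      True := by
  refine ⟨Equiv.ofBijective
    (fun q => ⟨affineSpan (ZMod 2) {X, q.1},
      (span_pair_line q.2).1, mem_affineSpan _ (Set.mem_insert _ _)⟩) ⟨?_, ?_⟩, trivial⟩
  · rintro ⟨q, hq⟩ ⟨q', hq'⟩ hqq
    have hset : ({X, q} : Set P) = {X, q'} := by
      rw [← (span_pair_line hq).2, ← (span_pair_line hq').2]
      exact congrArg _ (congrArg Subtype.val hqq)
    have : q ∈ ({X, q'} : Set P) := hset ▸ Set.mem_insert_of_mem _ rfl
    rcases this with h | h
    · exact absurd h hq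
    · exact Subtype.ext h
  · rintro ⟨l, hl, hX⟩
    obtain ⟨q, hq, hset⟩ := hl.pair hX
    refine ⟨⟨q, hq⟩, Subtype.ext ?_⟩
    exact SetLike.coe_injective (((span_pair_line hq).2).trans hset.symm)

include hn hdim in
lemma card_lines_through (X : P) :
    Nat.card {l : AffineSubspace (ZMod 2) P // ALine (ZMod 2) l ∧ X ∈ l} = 2 ^ n - 1 := by
  obtain ⟨e, -⟩ := equiv_lines_through hn hdim X
  have hfin : Module.Finite (ZMod 2) V := Module.finite_of_finrank_pos (by omega)
  have : Finite V := Module.finite_of_finite (ZMod 2)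
  have : Finite P := Finite.of_equiv V (Equiv.vaddConst X)
  have : Fintype P := Fintype.ofFinite P
  classical
  rw [← Nat.card_congr e, Nat.card_eq_fintype_card,
    Fintype.card_subtype_compl (fun q : P => q = X), Fintype.card_subtype_eq,
    ← Nat.card_eq_fintype_card, card_points hn hdim X]

include hn hdim in
lemma finite_lines_through (X : P) :
    Finite {l : AffineSubspace (ZMod 2) P // ALine (ZMod 2) l ∧ X ∈ l} := by
  obtain ⟨e, -⟩ := equiv_lines_through hn hdim X
  have hfin : Module.Finite (ZMod 2) V := Module.finite_of_finrank_pos (by omega)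
  have : Finite V := Module.finite_of_finite (ZMod 2)
  have : Finite P := Finite.of_equiv V (Equiv.vaddConst X)
  exact Finite.of_equiv _ e

end Aux

theorem statement15 {V P : Type*} [AddCommGroup V] [Module (ZMod 2) V] [AddTorsor V P]
    {n : ℕ} (hn : 3 ≤ n) (hdim : Module.finrank (ZMod 2) V = n) :
    (∀ S : Set (AffineSubspace (ZMod 2) P), (∀ l ∈ S, ALine (ZMod 2) l) →
      (∀ l₁ ∈ S, ∀ l₂ ∈ S, l₁ ≠ l₂ → AMeets l₁ l₂) →
      Cardinal.mk S ≤ ((2 ^ n - 1 : ℕ) : Cardinal)) ∧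
    (∀ X : P,
      Nat.card {l : AffineSubspace (ZMod 2) P // ALine (ZMod 2) l ∧ X ∈ l} = 2 ^ n - 1 ∧
      ∀ l₁ l₂ : AffineSubspace (ZMod 2) P, ALine (ZMod 2) l₁ → X ∈ l₁ →
        ALine (ZMod 2) l₂ → X ∈ l₂ → l₁ ≠ l₂ → AMeets l₁ l₂) := by
  have hbound : 7 ≤ 2 ^ n - 1 := by
    have : 2 ^ 3 ≤ 2 ^ n := Nat.pow_le_pow_right (by norm_num) hn
    omega
  -- cardinal of the set of lines through a point
  have hmkT : ∀ X : P,
      Cardinal.mk ↥({l : AffineSubspace (ZMod 2) P | ALine (ZMod 2) l ∧ X ∈ l}) =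
        ((2 ^ n - 1 : ℕ) : Cardinal) := by
    intro X
    have h1 : Nat.card {l : AffineSubspace (ZMod 2) P // ALine (ZMod 2) l ∧ X ∈ l} =
        2 ^ n - 1 := card_lines_through hn hdim X
    have h2 : Finite {l : AffineSubspace (ZMod 2) P // ALine (ZMod 2) l ∧ X ∈ l} :=
      finite_lines_through hn hdim X
    have : Fintype {l : AffineSubspace (ZMod 2) P // ALine (ZMod 2) l ∧ X ∈ l} :=
      Fintype.ofFinite _
    rw [show ↥({l : AffineSubspace (ZMod 2) P | ALine (ZMod 2) l ∧ X ∈ l}) =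
        {l : AffineSubspace (ZMod 2) P // ALine (ZMod 2) l ∧ X ∈ l} from rfl,
      Cardinal.mk_fintype, ← Nat.card_eq_fintype_card, h1]
  constructor
  · intro S hlines hmeet
    by_cases hsmall : ∀ l₁ ∈ S, ∀ l₂ ∈ S, l₁ = l₂
    · -- S is a subsingleton
      have : Cardinal.mk S ≤ 1 := by
        rw [Cardinal.mk_le_one_iff_set_subsingleton]
        exact fun a ha b hb => hsmall a ha b hb
      refine this.trans ?_
      rw [← Nat.cast_one]
      exact Nat.cast_le.mpr (by omega)
    · push_neg at hsmall
      obtain ⟨l₁, hl₁S, l₂, hl₂S, hne⟩ := hsmall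
      obtain ⟨-, A, hA₁, hA₂⟩ := hmeet l₁ hl₁S l₂ hl₂S hne
      rw [SetLike.mem_coe] at hA₁ hA₂
      obtain ⟨B, hBA, hB⟩ := (hlines l₁ hl₁S).pair hA₁
      obtain ⟨C, hCA, hC⟩ := (hlines l₂ hl₂S).pair hA₂
      have hBC : B ≠ C := by
        intro h
        exact hne (SetLike.coe_injective (hB.trans (h ▸ hC.symm)))
      -- every line in S contains A or has carrier {B, C}
      have hkey : ∀ l ∈ S, A ∈ l ∨ (l : Set P) = {B, C} := by
        intro l hlS
        by_cases hAl : A ∈ l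
        · exact Or.inl hAl
        have hne₁ : l ≠ l₁ := fun h => hAl (h ▸ hA₁)
        have hne₂ : l ≠ l₂ := fun h => hAl (h ▸ hA₂)
        obtain ⟨-, x, hx₁, hx₂⟩ := hmeet l hlS l₁ hl₁S hne₁
        obtain ⟨-, y, hy₁, hy₂⟩ := hmeet l hlS l₂ hl₂S hne₂
        have hxB : x = B := by
          have : x ∈ ({A, B} : Set P) := hB ▸ hx₂
          rcases this with h | h
          · exact absurd (h ▸ hx₁) (by simpa [h] using hAl)
          · exact h
        have hyC : y = C := by
          have : y ∈ ({A, C} : Set P) := hC ▸ hy₂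
          rcases this with h | h
          · exact absurd (h ▸ hy₁) (by simpa [h] using hAl)
          · exact h
        subst hxB hyC
        rw [SetLike.mem_coe] at hx₁
        obtain ⟨q, hq, hset⟩ := (hlines l hlS).pair hx₁
        rw [hset] at hy₁
        rcases hy₁ with h | h
        · exact absurd h.symm hBC
        · exact Or.inr (by rw [hset, ← h])
      by_cases hstar : ∀ l ∈ S, A ∈ l
      · -- star case
        have hsub : S ⊆ {l : AffineSubspace (ZMod 2) P | ALine (ZMod 2) l ∧ A ∈ l} :=
          fun l hl => ⟨hlines l hl, hstar l hl⟩
        calc Cardinal.mk S ≤ _ := Cardinal.mk_le_mk_of_subset hsub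
          _ = _ := hmkT A
      · -- triangle case
        push_neg at hstar
        obtain ⟨l₀, hl₀S, hAl₀⟩ := hstar
        have hl₀ : (l₀ : Set P) = {B, C} := (hkey l₀ hl₀S).resolve_left hAl₀
        have hsub : S ⊆ ({l₁, l₂, l₀} : Set (AffineSubspace (ZMod 2) P)) := by
          intro l hlS
          rcases hkey l hlS with hAl | hset
          · obtain ⟨q, hq, hlset⟩ := (hlines l hlS).pair hAl
            by_cases hll₀ : l = l₀
            · exact Or.inr (Or.inr hll₀)
            obtain ⟨-, z, hz₁, hz₂⟩ := hmeet l hlS l₀ hl₀S hll₀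
            rw [hl₀] at hz₂
            have hz : z ∈ ({B, C} : Set P) := hz₂
            have hzA : z ≠ A := by
              rintro rfl
              rcases hz with h | h
              · exact hBA h.symm
              · exact hCA h.symm
            have hzq : z = q := by
              rw [hlset] at hz₁
              rcases hz₁ with h | h
              · exact absurd h hzA
              · exact h
            rcases hz with h | h
            · left
              refine SetLike.coe_injective (hlset.trans ?_)
              rw [← hzq, h, hB]
            · right; left
              refine SetLike.coe_injective (hlset.trans ?_)
              rw [← hzq, h, hC]
          · exact Or.inr (Or.inr (SetLike.coe_injective (hset.trans hl₀.symm)))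
        have h3 : Cardinal.mk ↥({l₁, l₂, l₀} : Set (AffineSubspace (ZMod 2) P)) ≤ 3 := by
          calc Cardinal.mk ↥({l₁, l₂, l₀} : Set (AffineSubspace (ZMod 2) P))
              ≤ Cardinal.mk ↥({l₂, l₀} : Set (AffineSubspace (ZMod 2) P)) + 1 :=
                Cardinal.mk_insert_le
            _ ≤ (Cardinal.mk ↥({l₀} : Set (AffineSubspace (ZMod 2) P)) + 1) + 1 := by
                gcongr; exact Cardinal.mk_insert_le
            _ = 3 := by rw [Cardinal.mk_singleton]; norm_num
        calc Cardinal.mk S ≤ _ := Cardinal.mk_le_mk_of_subset hsub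
          _ ≤ 3 := h3
          _ ≤ ((2 ^ n - 1 : ℕ) : Cardinal) := by
              rw [show (3 : Cardinal) = ((3 : ℕ) : Cardinal) by norm_num]
              exact Nat.cast_le.mpr (by omega)
  · intro X
    refine ⟨card_lines_through hn hdim X, ?_⟩
    intro l₁ l₂ h₁ hX₁ h₂ hX₂ hne
    exact ⟨hne, X, hX₁, hX₂⟩
end

section
/- Let n ≥ 3, let K be a division ring with at least 3 elements, and let P be an n-dimensional affine space over K. For all lines a, b of P the following are equivalent: (i) there exist lines c, d, e such that a, c, d are pairwise distinct and concurrent; b, c, e are pairwise distinct and concurrent; d ∼ b; d ∼ e; and e ∼ a; (ii) a and b are coplanar (some plane contains both; a = b is allowed). -/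
/-- Three lines are pairwise distinct and concurrent. -/
def AS {K V P : Type*} [DivisionRing K] [AddCommGroup V] [Module K V]
    [AddTorsor V P] (a b c : AffineSubspace K P) : Prop :=
  a ≠ b ∧ a ≠ c ∧ b ≠ c ∧ ∃ p : P, p ∈ a ∧ p ∈ b ∧ p ∈ c

/-!
(i) ⇒ (ii). Let `p` be the common point of `a, c, d` and `q` that of `b, c, e`. If `q ∈ a`, the
lines `a` and `b` meet and span a plane. Otherwise let `π` be the plane spanned by `a` and `q`.
Each of `e`, `d`, `b` in turn has two distinct points in `π`: `e` contains `q` and meets `a`,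
`d` contains `p` and meets `e` away from `p` (else `c = e`), and `b` contains `q` and meets `d`
away from `q` (else `c = d`).

(ii) ⇒ (i). Two coplanar lines either meet or are parallel. Let `u` span the direction of `a` and
pick `t ∉ {0, 1}` (here `|K| ≥ 3`). If `a` and `b` meet at `x`, take `c, d, e` through `x` with
directions `w`, `w + u`, `w + t • u`, where `w` lies outside the span of the directions of `a`
and `b` (here `n ≥ 3`).
If they are parallel, take `p ∈ a`, `q ∈ b`, `w = q -ᵥ p`, and the same directions, with `c, d`
through `p` and `e` through `q`.
-/

open Module AffineSubspace Submodule

section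

variable {K V P : Type*} [DivisionRing K] [AddCommGroup V] [Module K V] [AddTorsor V P]

def CoplanarityWitness (a b c d e : AffineSubspace K P) : Prop :=
  ALine K c ∧ ALine K d ∧ ALine K e ∧ AS a c d ∧ AS b c e ∧ AMeets d b ∧ AMeets d e ∧ AMeets e a

section Vectors

variable {u w : V} {t : K}

theorem linearIndependent_pair_of_notMem_span (hu : u ≠ 0) (hw : w ∉ K ∙ u) :
    LinearIndependent K ![w, u] :=
  LinearIndependent.pair_symm_iff.1 <| (LinearIndependent.pair_iff' hu).2 fun c h =>
    hw (h ▸ smul_mem _ c (mem_span_singleton_self u))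

theorem LinearIndependent.add_smul_notMem_span_left (hind : LinearIndependent K ![w, u])
    (ht : t ≠ 0) : w + t • u ∉ K ∙ w := by
  intro h
  obtain ⟨c, hc⟩ := mem_span_singleton.1 h
  have hzero : (c - 1) • w + (-t) • u = 0 := by
    rw [sub_smul, one_smul, hc, neg_smul]
    abel
  exact ht (neg_eq_zero.1 (LinearIndependent.pair_iff.1 hind _ _ hzero).2)

theorem LinearIndependent.add_notMem_span_add_smul (hind : LinearIndependent K ![w, u])
    (ht : t ≠ 1) : w + u ∉ K ∙ (w + t • u) := by
  intro h
  obtain ⟨c, hc⟩ := mem_span_singleton.1 h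
  have hzero : (c - 1) • w + (c * t - 1) • u = 0 := by
    rw [sub_smul, sub_smul, one_smul, one_smul, mul_smul, sub_add_sub_comm, ← smul_add, hc,
      sub_self]
  obtain ⟨hc1, hct⟩ := LinearIndependent.pair_iff.1 hind _ _ hzero
  rw [sub_eq_zero.1 hc1, one_mul, sub_eq_zero] at hct
  exact ht hct

end Vectors

section Lines

variable {a b s : AffineSubspace K P} {x y : P}

theorem ALine.mk'_span_singleton (x : P) {v : V} (hv : v ≠ 0) : ALine K (mk' x (K ∙ v)) :=
  ⟨⟨x, self_mem_mk' _ _⟩, by rw [direction_mk', finrank_span_singleton hv]⟩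

theorem mk'_span_singleton_ne (x : P) {v : V} (hv : v ∉ s.direction) : mk' x (K ∙ v) ≠ s := by
  rintro rfl
  exact hv (by rw [direction_mk']; exact mem_span_singleton_self v)

theorem ALine.direction_eq_span (ha : ALine K a) {u : V} (hu : u ∈ a.direction) (hu0 : u ≠ 0) :
    a.direction = K ∙ u := by
  have : FiniteDimensional K a.direction := Module.finite_of_finrank_eq_succ ha.2
  refine (eq_of_le_of_finrank_eq ((span_singleton_le_iff_mem _ _).2 hu) ?_).symm
  rw [finrank_span_singleton hu0, ha.2]

theorem ALine.exists_direction_eq_span (ha : ALine K a) : ∃ u : V, u ≠ 0 ∧ a.direction = K ∙ u := by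
  have hbot : a.direction ≠ ⊥ := fun h => by
    have := ha.2
    rw [h, finrank_bot] at this
    exact zero_ne_one this
  obtain ⟨u, hu, hu0⟩ := exists_mem_ne_zero_of_ne_bot hbot
  exact ⟨u, hu0, ha.direction_eq_span hu hu0⟩

theorem ALine.le_of_mem (ha : ALine K a) (hx : x ∈ a) (hy : y ∈ a) (hxy : x ≠ y) (hxs : x ∈ s)
    (hys : y ∈ s) : a ≤ s := by
  have hdir : a.direction ≤ s.direction := by
    rw [ha.direction_eq_span (vsub_mem_direction hy hx) (vsub_ne_zero.2 hxy.symm),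
      span_singleton_le_iff_mem]
    exact vsub_mem_direction hys hxs
  intro z hz
  simpa using vadd_mem_of_mem_direction (hdir (vsub_mem_direction hz hx)) hxs

theorem ALine.eq_of_mem (ha : ALine K a) (hb : ALine K b) (hxy : x ≠ y) (hxa : x ∈ a)
    (hya : y ∈ a) (hxb : x ∈ b) (hyb : y ∈ b) : a = b :=
  le_antisymm (ha.le_of_mem hxa hya hxy hxb hyb) (hb.le_of_mem hxb hyb hxy hxa hya)

theorem ALine.exists_notMem (ha : ALine K a) (hV : 1 < finrank K V) : ∃ q, q ∉ a := by
  obtain ⟨x, hx⟩ := ha.1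
  obtain ⟨w, -, hw⟩ := SetLike.exists_of_lt (lt_top_of_finrank_lt_finrank (ha.2 ▸ hV))
  exact ⟨w +ᵥ x, fun h => hw (by simpa using vsub_mem_direction h hx)⟩

variable [FiniteDimensional K V]

theorem ALine.exists_plane_of_notMem (ha : ALine K a) {q : P} (hq : q ∉ a) :
    ∃ π : AffineSubspace K P, APlane K π ∧ a ≤ π ∧ q ∈ π := by
  obtain ⟨p, hp⟩ := ha.1
  have hm : q -ᵥ p ∉ a.direction := fun h => hq ((vsub_right_mem_direction_iff_mem hp q).1 h)
  refine ⟨mk' p (a.direction ⊔ K ∙ (q -ᵥ p)), ⟨⟨p, self_mem_mk' _ _⟩, ?_⟩, fun z hz => ?_, ?_⟩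
  · rw [direction_mk', finrank_sup_span_singleton hm, ha.2]
  · exact mem_mk'.2 (mem_sup_left (vsub_mem_direction hz hp))
  · exact mem_mk'.2 (mem_sup_right (mem_span_singleton_self _))

theorem exists_plane_of_mem_of_mem (hV : 1 < finrank K V) (ha : ALine K a) (hb : ALine K b)
    (hxa : x ∈ a) (hxb : x ∈ b) : ∃ π : AffineSubspace K P, APlane K π ∧ a ≤ π ∧ b ≤ π := by
  by_cases hba : b ≤ a
  · obtain ⟨q, hq⟩ := ha.exists_notMem hV
    obtain ⟨π, hπ, haπ, -⟩ := ha.exists_plane_of_notMem hq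
    exact ⟨π, hπ, haπ, hba.trans haπ⟩
  · obtain ⟨q, hqb, hqa⟩ := SetLike.not_le_iff_exists.1 hba
    obtain ⟨π, hπ, haπ, hqπ⟩ := ha.exists_plane_of_notMem hqa
    exact ⟨π, hπ, haπ, hb.le_of_mem hxb hqb (ne_of_mem_of_not_mem hxa hqa) (haπ hxa) hqπ⟩

theorem ALine.direction_eq_of_inter_eq_empty (ha : ALine K a) (hb : ALine K b)
    {π : AffineSubspace K P} (hπ : APlane K π) (haπ : a ≤ π) (hbπ : b ≤ π)
    (hab : (a ∩ b : Set P) = ∅) : a.direction = b.direction := by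
  suffices hba : b.direction ≤ a.direction from
    (eq_of_le_of_finrank_eq hba (hb.2.trans ha.2.symm)).symm
  intro v hv
  by_contra hva
  have hsup : finrank K ↥(a.direction ⊔ b.direction) = 2 := by
    rw [hb.direction_eq_span hv (ne_of_mem_of_not_mem (zero_mem _) hva).symm,
      finrank_sup_span_singleton hva, ha.2]
  have hlt := finrank_lt_finrank_of_lt (sup_direction_lt_of_nonempty_of_inter_empty ha.1 hb.1 hab)
  have hle := finrank_mono (direction_le (sup_le haπ hbπ))
  rw [hsup] at hlt
  rw [hπ.2] at hle
  omega

end Lines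

section Witness

variable {a b c d e : AffineSubspace K P}

theorem coplanarityWitness_mk' {W : Submodule K V} {u w : V} {t : K} (hu0 : u ≠ 0) (huW : u ∈ W)
    (hwW : w ∉ W) (ht0 : t ≠ 0) (ht1 : t ≠ 1) (haW : a.direction ≤ W) (hbW : b.direction ≤ W)
    {p q : P} (hp : p ∈ a) (hq : q ∈ b) (hqc : q ∈ mk' p (K ∙ w))
    (hdb : ((mk' p (K ∙ (w + u)) : Set P) ∩ b).Nonempty)
    (hde : ((mk' p (K ∙ (w + u)) : Set P) ∩ mk' q (K ∙ (w + t • u))).Nonempty)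
    (hea : ((mk' q (K ∙ (w + t • u)) : Set P) ∩ a).Nonempty) :
    CoplanarityWitness a b (mk' p (K ∙ w)) (mk' p (K ∙ (w + u))) (mk' q (K ∙ (w + t • u))) := by
  have hoff : ∀ s : K, w + s • u ∉ W := fun s =>
    (Submodule.add_mem_iff_left _ (smul_mem _ s huW)).not.2 hwW
  have hoff1 : w + u ∉ W := by simpa using hoff 1
  have hind := linearIndependent_pair_of_notMem_span hu0 fun h =>
    hwW ((span_singleton_le_iff_mem _ _).2 huW h)
  have hne : ∀ {v}, v ∉ W → v ≠ 0 := fun hv h0 => hv (h0 ▸ zero_mem _)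
  have hnea : ∀ {v}, v ∉ W → ∀ x, mk' x (K ∙ v) ≠ a := fun hv x =>
    mk'_span_singleton_ne x fun h => hv (haW h)
  have hneb : ∀ {v}, v ∉ W → ∀ x, mk' x (K ∙ v) ≠ b := fun hv x =>
    mk'_span_singleton_ne x fun h => hv (hbW h)
  have hcd : mk' p (K ∙ w) ≠ mk' p (K ∙ (w + u)) :=
    (mk'_span_singleton_ne p (by simpa using hind.add_smul_notMem_span_left one_ne_zero)).symm
  have hce : mk' p (K ∙ w) ≠ mk' q (K ∙ (w + t • u)) :=
    (mk'_span_singleton_ne q (by simpa using hind.add_smul_notMem_span_left ht0)).symm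
  have hde' : mk' p (K ∙ (w + u)) ≠ mk' q (K ∙ (w + t • u)) :=
    mk'_span_singleton_ne p (by simpa using hind.add_notMem_span_add_smul ht1)
  exact ⟨.mk'_span_singleton p (hne hwW), .mk'_span_singleton p (hne hoff1),
    .mk'_span_singleton q (hne (hoff t)),
    ⟨(hnea hwW p).symm, (hnea hoff1 p).symm, hcd, p, hp, self_mem_mk' _ _, self_mem_mk' _ _⟩,
    ⟨(hneb hwW p).symm, (hneb (hoff t) q).symm, hce, q, hq, hqc, self_mem_mk' _ _⟩,
    ⟨hneb hoff1 p, hdb⟩, ⟨hde', hde⟩, ⟨hnea (hoff t) q, hea⟩⟩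

theorem exists_coplanarityWitness_of_direction_eq (hK : (3 : Cardinal) ≤ Cardinal.mk K)
    (ha : ALine K a) (hab : a.direction = b.direction) {p q : P} (hp : p ∈ a) (hq : q ∈ b)
    (hqa : q ∉ a) : ∃ c d e, CoplanarityWitness a b c d e := by
  obtain ⟨u, hu0, hua⟩ := ha.exists_direction_eq_span
  obtain ⟨t, ht0, ht1⟩ := Cardinal.exists_ne_ne_of_three_le hK 0 1
  set w := q -ᵥ p with hw
  have hwa : w ∉ a.direction := fun h => hqa ((vsub_right_mem_direction_iff_mem hp q).1 h)
  have hua' : u ∈ a.direction := hua ▸ mem_span_singleton_self u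
  have hdb : u +ᵥ q ∈ mk' p (K ∙ (w + u)) := by
    rw [mem_mk', vadd_vsub_assoc, add_comm]
    exact mem_span_singleton_self _
  -- `d` and `e` meet at `μ • (w + t • u) +ᵥ q` with `μ * (t - 1) = 1`
  set μ := (t - 1)⁻¹
  have hμ : μ * t = μ + 1 := by
    rw [← sub_eq_iff_eq_add', ← mul_sub_one, inv_mul_cancel₀ (sub_ne_zero.2 ht1)]
  have hde : μ • (w + t • u) +ᵥ q ∈ mk' p (K ∙ (w + u)) := by
    refine mem_mk'.2 (mem_span_singleton.2 ⟨μ * t, ?_⟩)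
    rw [vadd_vsub_assoc, ← hw, smul_add, smul_add, smul_smul, hμ, add_smul, one_smul]
    abel
  have hea : (-t) • u +ᵥ p ∈ mk' q (K ∙ (w + t • u)) := by
    refine mem_mk'.2 (mem_span_singleton.2 ⟨-1, ?_⟩)
    rw [vadd_vsub_assoc, ← neg_vsub_eq_vsub_rev, ← hw, neg_one_smul, neg_add, neg_smul, add_comm]
  exact ⟨_, _, _, coplanarityWitness_mk' hu0 hua' hwa ht0 ht1 le_rfl hab.ge hp hq
    (mem_mk'.2 (mem_span_singleton_self w))
    ⟨_, hdb, vadd_mem_of_mem_direction (hab ▸ hua') hq⟩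
    ⟨_, hde, vadd_mem_mk' q (smul_mem _ _ (mem_span_singleton_self _))⟩
    ⟨_, hea, vadd_mem_of_mem_direction (smul_mem _ _ hua') hp⟩⟩

variable [FiniteDimensional K V]

theorem exists_coplanarityWitness_of_mem_of_mem (hK : (3 : Cardinal) ≤ Cardinal.mk K)
    (hV : 3 ≤ finrank K V) (ha : ALine K a) (hb : ALine K b) {x : P} (hxa : x ∈ a)
    (hxb : x ∈ b) : ∃ c d e, CoplanarityWitness a b c d e := by
  obtain ⟨u, hu0, hua⟩ := ha.exists_direction_eq_span
  obtain ⟨t, ht0, ht1⟩ := Cardinal.exists_ne_ne_of_three_le hK 0 1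
  have hS : finrank K ↥(a.direction ⊔ b.direction) < finrank K V :=
    (finrank_add_le_finrank_add_finrank _ _).trans_lt (by rw [ha.2, hb.2]; omega)
  obtain ⟨w, -, hwS⟩ := SetLike.exists_of_lt (lt_top_of_finrank_lt_finrank hS)
  have hx : ∀ {v : V}, x ∈ mk' x (K ∙ v) := self_mem_mk' _ _
  exact ⟨_, _, _, coplanarityWitness_mk' hu0 (mem_sup_left (hua ▸ mem_span_singleton_self u))
    hwS ht0 ht1 le_sup_left le_sup_right hxa hxb hx ⟨x, hx, hxb⟩ ⟨x, hx, hx⟩ ⟨x, hx, hxa⟩⟩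

theorem CoplanarityWitness.exists_plane (h : CoplanarityWitness a b c d e)
    (hV : 1 < finrank K V) (ha : ALine K a) (hb : ALine K b) :
    ∃ π : AffineSubspace K P, APlane K π ∧ a ≤ π ∧ b ≤ π := by
  obtain ⟨hc, hd, he, ⟨-, -, hcd, p, hpa, hpc, hpd⟩, ⟨-, -, hce, q, hqb, hqc, hqe⟩,
    ⟨-, y, hyd, hyb⟩, ⟨-, z, hzd, hze⟩, ⟨-, r, hre, hra⟩⟩ := h
  by_cases hqa : q ∈ a
  · exact exists_plane_of_mem_of_mem hV ha hb hqa hqb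
  obtain ⟨π, hπ, haπ, hqπ⟩ := ha.exists_plane_of_notMem hqa
  have hpq : p ≠ q := ne_of_mem_of_not_mem hpa hqa
  have heπ : e ≤ π := he.le_of_mem hqe hre (ne_of_mem_of_not_mem hra hqa).symm hqπ (haπ hra)
  have hpz : p ≠ z := by
    rintro rfl
    exact hce (hc.eq_of_mem he hpq hpc hqc hze hqe)
  have hdπ : d ≤ π := hd.le_of_mem hpd hzd hpz (haπ hpa) (heπ hze)
  have hqy : q ≠ y := by
    rintro rfl
    exact hcd (hc.eq_of_mem hd hpq hpc hqc hpd hyd)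
  exact ⟨π, hπ, haπ, hb.le_of_mem hqb hyb hqy hqπ (hdπ hyd)⟩

end Witness

end

theorem statement17 {K V P : Type*} [DivisionRing K] [AddCommGroup V] [Module K V]
    [AddTorsor V P] {n : ℕ} (hn : 3 ≤ n)
    (hK : (3 : Cardinal) ≤ Cardinal.mk K)
    (hdim : Module.finrank K V = n)
    (a b : AffineSubspace K P) (ha : ALine K a) (hb : ALine K b) :
    (∃ c d e : AffineSubspace K P, ALine K c ∧ ALine K d ∧ ALine K e ∧
      AS a c d ∧ AS b c e ∧ AMeets d b ∧ AMeets d e ∧ AMeets e a) ↔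
    (∃ π : AffineSubspace K P, APlane K π ∧ a ≤ π ∧ b ≤ π) := by
  have : FiniteDimensional K V := .of_finrank_pos (by omega)
  refine ⟨fun ⟨c, d, e, h⟩ => CoplanarityWitness.exists_plane h (by omega) ha hb, ?_⟩
  rintro ⟨π, hπ, haπ, hbπ⟩
  by_cases hab : ((a : Set P) ∩ b).Nonempty
  · obtain ⟨x, hxa, hxb⟩ := hab
    exact exists_coplanarityWitness_of_mem_of_mem hK (by omega) ha hb hxa hxb
  · obtain ⟨p, hp⟩ := ha.1
    obtain ⟨q, hq⟩ := hb.1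
    exact exists_coplanarityWitness_of_direction_eq hK ha
      (ha.direction_eq_of_inter_eq_empty hb hπ haπ hbπ (Set.not_nonempty_iff_eq_empty.1 hab))
      hp hq fun hqa => hab ⟨q, hqa, hq⟩
end

section
/- Let K be a division ring, P a finite-dimensional affine space over K, m ≥ 1 and q ≥ 1, and let a₁, …, a_m be lines of P. If a line x of P satisfies M_q(a₁,…,a_m; x), then x is contained in the affine span of a₁ ∪ … ∪ a_m. -/
section Aux

variable {K V P : Type*} [DivisionRing K] [AddCommGroup V] [Module K V]
    [AddTorsor V P] [FiniteDimensional K V]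

/-- A line's direction is spanned by any nonzero vector in it. -/
lemma aline_direction_eq_span {x : AffineSubspace K P} (hx : ALine K x) {v : V}
    (hv : v ∈ x.direction) (h0 : v ≠ 0) : x.direction = Submodule.span K {v} := by
  refine (Submodule.eq_of_le_of_finrank_eq
    ((Submodule.span_singleton_le_iff_mem v _).2 hv) ?_).symm
  rw [hx.2, finrank_span_singleton h0]

/-- Two distinct lines meet in at most one point. -/
lemma aline_inter_subsingleton {x y : AffineSubspace K P} (hx : ALine K x) (hy : ALine K y)
    (hxy : x ≠ y) {p p' : P} (hp : p ∈ x) (hp' : p' ∈ x) (hpy : p ∈ y) (hp'y : p' ∈ y) :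
    p = p' := by
  by_contra hne
  apply hxy
  apply AffineSubspace.ext_of_direction_eq
  · rw [aline_direction_eq_span hx (AffineSubspace.vsub_mem_direction hp' hp)
      (vsub_ne_zero.2 (Ne.symm hne)),
      aline_direction_eq_span hy (AffineSubspace.vsub_mem_direction hp'y hpy)
      (vsub_ne_zero.2 (Ne.symm hne))]
  · exact ⟨p, hp, hpy⟩

/-- A line containing two distinct points of an affine subspace lies in it. -/
lemma aline_le_of_two_points {x S : AffineSubspace K P} (hx : ALine K x) {p r : P}
    (hp : p ∈ x) (hr : r ∈ x) (hpr : p ≠ r) (hpS : p ∈ S) (hrS : r ∈ S) : x ≤ S := by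
  intro t ht
  have hdir : x.direction = Submodule.span K {r -ᵥ p} :=
    aline_direction_eq_span hx (AffineSubspace.vsub_mem_direction hr hp)
      (vsub_ne_zero.2 (Ne.symm hpr))
  have htp : t -ᵥ p ∈ Submodule.span K {r -ᵥ p} := by
    rw [← hdir]; exact AffineSubspace.vsub_mem_direction ht hp
  obtain ⟨c, hc⟩ := Submodule.mem_span_singleton.1 htp
  have : t = (c • (r -ᵥ p)) +ᵥ p := by rw [hc, vsub_vadd]
  rw [this]
  exact AffineSubspace.vadd_mem_of_mem_direction
    (Submodule.smul_mem _ c (AffineSubspace.vsub_mem_direction hrS hpS)) hpS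

/-- Key step: `MPred ls x` with all of `ls` lines contained in `S` forces `x ≤ S`. -/
lemma mpred_le {S : AffineSubspace K P} {ls : List (AffineSubspace K P)}
    (hls : ∀ l ∈ ls, ALine K l) (hle : ∀ l ∈ ls, l ≤ S)
    {x : AffineSubspace K P} (hx : ALine K x) (h : MPred ls x) : x ≤ S := by
  rcases h with h | ⟨y, hy, z, hz, ⟨hxy, ⟨p, hpx, hpy⟩⟩, ⟨hxz, ⟨r, hrx, hrz⟩⟩, hne⟩
  · exact hle x h
  · have hpr : p ≠ r := by
      rintro rfl
      apply hne
      ext t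
      simp only [AffineSubspace.mem_inf_iff]
      constructor
      · rintro ⟨htx, hty⟩
        have := aline_inter_subsingleton hx (hls y hy) hxy hpx htx hpy hty
        exact ⟨htx, this ▸ hrz⟩
      · rintro ⟨htx, htz⟩
        have := aline_inter_subsingleton hx (hls z hz) hxz hrx htx hrz htz
        exact ⟨htx, this ▸ hpy⟩
    exact aline_le_of_two_points hx hpx hrx hpr (hle y hy hpy) (hle z hz hrz)

end Aux

theorem statement19 {K V P : Type*} [DivisionRing K] [AddCommGroup V] [Module K V]
    [AddTorsor V P] [FiniteDimensional K V]
    {m q : ℕ} (hm : 1 ≤ m) (hq : 1 ≤ q)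
    (as : List (AffineSubspace K P)) (hlen : as.length = m)
    (hlines : ∀ l ∈ as, ALine K l)
    (x : AffineSubspace K P) (hx : ALine K x)
    (hMq : MqPred q as x) :
    x ≤ affineSpan K (⋃ l ∈ as, (l : Set P)) := by
  obtain ⟨b, hb, hchain, hfin⟩ := hMq
  set S : AffineSubspace K P := affineSpan K (⋃ l ∈ as, (l : Set P)) with hS
  have hasS : ∀ l ∈ as, l ≤ S := fun l hl t ht =>
    subset_affineSpan K _ (Set.mem_biUnion hl ht)
  have hbS : ∀ n : ℕ, ∀ hn : n < q, b ⟨n, hn⟩ ≤ S := by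
    intro n
    induction n using Nat.strong_induction_on with
    | _ n IH =>
      intro hn
      set i : Fin q := ⟨n, hn⟩ with hi
      have hin : (i : ℕ) = n := rfl
      refine mpred_le ?_ ?_ (hb i) (hchain i)
      · intro l hl
        rcases List.mem_append.1 hl with h | h
        · exact hlines l h
        · obtain ⟨k, hk, hkl⟩ := List.mem_iff_getElem.1 h
          rw [List.getElem_take] at hkl
          have hk' : k < q := by
            have := hk
            simp [List.length_take, List.length_ofFn, hin] at this
            omega
          rw [List.getElem_ofFn] at hkl
          exact hkl ▸ hb _
      · intro l hl
        rcases List.mem_append.1 hl with h | h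
        · exact hasS l h
        · obtain ⟨k, hk, hkl⟩ := List.mem_iff_getElem.1 h
          have hki : k < (i : ℕ) := by
            have := hk
            simp [List.length_take, List.length_ofFn, hin] at this
            omega
          rw [List.getElem_take, List.getElem_ofFn] at hkl
          have hk' : k < q := lt_of_lt_of_le hki (le_of_lt i.isLt)
          exact hkl ▸ IH k hki hk'
  refine mpred_le ?_ ?_ hx hfin
  · intro l hl
    rcases List.mem_append.1 hl with h | h
    · exact hlines l h
    · obtain ⟨k, hk, hkl⟩ := List.mem_iff_getElem.1 h
      rw [List.getElem_ofFn] at hkl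
      exact hkl ▸ hb _
  · intro l hl
    rcases List.mem_append.1 hl with h | h
    · exact hasS l h
    · obtain ⟨k, hk, hkl⟩ := List.mem_iff_getElem.1 h
      have hk' : k < q := by simpa using hk
      rw [List.getElem_ofFn] at hkl
      exact hkl ▸ hbS k hk'
end
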